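/- Let S ⊂ ℝ^{n+1} be a nonempty compact set and let r₀ > 0. If x, y ∈ ℝ^{n+1} satisfy u_θ(x) > r₀ and u_θ(y) > r₀, then for every point p on the line segment joining x and y one has u_θ(p)² ≥ r₀² − |x − y|² / (4 (1 − |cos θ|)²). -/

import Mathlib

open Metric MeasureTheory

noncomputable section

abbrev Euc (n : ℕ) : Type := EuclideanSpace ℝ (Fin (n + 1))

/-- The vertical unit vector `E_{n+1} = (0, …, 0, 1)`. -/
def lastE (n : ℕ) : Euc n := EuclideanSpace.single (Fin.last n) 1

/-- The capillary gauge `F_θ(ξ) = |ξ| - cos θ ⟨ξ, E_{n+1}⟩`. -/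
def capF (n : ℕ) (θ : ℝ) (ξ : Euc n) : ℝ :=
  ‖ξ‖ - Real.cos θ * (inner ℝ ξ (lastE n) : ℝ)

/-- The dual gauge `F°_θ(x) = sup {⟨x, z⟩ / F_θ(z) : z ∈ 𝕊ⁿ}`. -/
def capFdual (n : ℕ) (θ : ℝ) (x : Euc n) : ℝ :=
  ⨆ z : sphere (0 : Euc n) 1, (inner ℝ x (z : Euc n) : ℝ) / capF n θ (z : Euc n)

/-- The shifted distance to a set `S`: `u_θ(y) = inf_{z ∈ S} F°_θ(z - y)`. -/
def shiftedDist (n : ℕ) (θ : ℝ) (S : Set (Euc n)) (y : Euc n) : ℝ :=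
  sInf ((fun z => capFdual n θ (z - y)) '' S)

section Aux

variable {n : ℕ} {θ : ℝ}

lemma lastE_norm (n : ℕ) : ‖lastE n‖ = 1 := by
  simp [lastE]

lemma lastE_mem : lastE n ∈ sphere (0 : Euc n) 1 := by
  simp [mem_sphere_zero_iff_norm, lastE_norm]

instance sphere_nonempty' : Nonempty (sphere (0 : Euc n) 1) := ⟨⟨lastE n, lastE_mem⟩⟩

lemma capF_ge (hc : |Real.cos θ| < 1) {z : Euc n} (hz : ‖z‖ = 1) :
    1 - |Real.cos θ| ≤ capF n θ z := by
  have h1 : |(inner ℝ z (lastE n) : ℝ)| ≤ 1 := by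
    have h := abs_real_inner_le_norm z (lastE n)
    rw [hz, lastE_norm] at h; simpa using h
  have h2 : |Real.cos θ * (inner ℝ z (lastE n) : ℝ)| ≤ |Real.cos θ| := by
    rw [abs_mul]
    nlinarith [abs_nonneg (Real.cos θ), abs_nonneg ((inner ℝ z (lastE n) : ℝ))]
  rw [capF, hz]
  have h3 := (abs_le.mp h2).2
  linarith

lemma capF_pos (hc : |Real.cos θ| < 1) {z : Euc n} (hz : ‖z‖ = 1) :
    0 < capF n θ z :=
  lt_of_lt_of_le (by linarith) (capF_ge hc hz)

lemma term_le (hc : |Real.cos θ| < 1) (v : Euc n) (z : sphere (0 : Euc n) 1) :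
    (inner ℝ v (z : Euc n) : ℝ) / capF n θ (z : Euc n) ≤ ‖v‖ / (1 - |Real.cos θ|) := by
  have hz : ‖(z : Euc n)‖ = 1 := mem_sphere_zero_iff_norm.mp z.2
  refine div_le_div₀ (norm_nonneg v) ?_ (by linarith) (capF_ge hc hz)
  have h := real_inner_le_norm v (z : Euc n)
  rw [hz, mul_one] at h
  exact h

lemma bddAboveTerms (hc : |Real.cos θ| < 1) (v : Euc n) :
    BddAbove (Set.range fun z : sphere (0 : Euc n) 1 =>
      (inner ℝ v (z : Euc n) : ℝ) / capF n θ (z : Euc n)) :=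
  ⟨‖v‖ / (1 - |Real.cos θ|), by rintro _ ⟨z, rfl⟩; exact term_le hc v z⟩

lemma capFdual_nonneg (hc : |Real.cos θ| < 1) (v : Euc n) : 0 ≤ capFdual n θ v := by
  have hc1 : Real.cos θ < 1 := lt_of_abs_lt hc
  have hc2 : -1 < Real.cos θ := neg_lt_of_abs_lt hc
  have hE : (inner ℝ (lastE n) (lastE n : Euc n) : ℝ) = 1 := by
    rw [real_inner_self_eq_norm_sq, lastE_norm]; norm_num
  rcases le_or_gt 0 (inner ℝ v (lastE n) : ℝ) with h | h
  · refine le_trans ?_ (le_ciSup (bddAboveTerms hc v) ⟨lastE n, lastE_mem⟩)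
    have hF : capF n θ (lastE n) = 1 - Real.cos θ := by
      rw [capF, lastE_norm, hE, mul_one]
    rw [hF]
    exact div_nonneg h (by linarith)
  · refine le_trans ?_ (le_ciSup (bddAboveTerms hc v)
      ⟨-lastE n, by simpa [mem_sphere_zero_iff_norm] using lastE_norm n⟩)
    have hF : capF n θ (-lastE n : Euc n) = 1 + Real.cos θ := by
      rw [capF, norm_neg, lastE_norm, inner_neg_left, hE]; ring
    show (0 : ℝ) ≤ (inner ℝ v (-lastE n : Euc n) : ℝ) / capF n θ (-lastE n : Euc n)
    rw [hF, inner_neg_right]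
    exact div_nonneg (by linarith) (by linarith)

lemma norm_to_dual (hc : |Real.cos θ| < 1) {v : Euc n} {r : ℝ}
    (h : ‖v + (r * Real.cos θ) • lastE n‖ ≤ r) : capFdual n θ v ≤ r := by
  apply ciSup_le
  rintro ⟨z, hzm⟩
  have hz : ‖z‖ = 1 := mem_sphere_zero_iff_norm.mp hzm
  have hF : 0 < capF n θ z := capF_pos hc hz
  rw [div_le_iff₀ hF]
  have h1 : (inner ℝ v z : ℝ) = (inner ℝ (v + (r * Real.cos θ) • lastE n) z : ℝ)
      - r * Real.cos θ * (inner ℝ (lastE n) z : ℝ) := by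
    rw [inner_add_left, real_inner_smul_left]; ring
  have h2 : (inner ℝ (v + (r * Real.cos θ) • lastE n) z : ℝ) ≤ r := by
    calc (inner ℝ (v + (r * Real.cos θ) • lastE n) z : ℝ)
        ≤ ‖v + (r * Real.cos θ) • lastE n‖ * ‖z‖ := real_inner_le_norm _ _
      _ ≤ r := by rw [hz, mul_one]; exact h
  have h3 : (inner ℝ (lastE n) z : ℝ) = (inner ℝ z (lastE n) : ℝ) := real_inner_comm _ _
  rw [capF, hz, h1, h3]
  nlinarith

lemma dual_to_norm (hc : |Real.cos θ| < 1) {v : Euc n} {r : ℝ} (hr : 0 ≤ r)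
    (h : capFdual n θ v ≤ r) : ‖v + (r * Real.cos θ) • lastE n‖ ≤ r := by
  set w := v + (r * Real.cos θ) • lastE n with hw
  have key : ∀ z : Euc n, ‖z‖ = 1 → (inner ℝ w z : ℝ) ≤ r := by
    intro z hz
    have hterm : (inner ℝ v z : ℝ) / capF n θ z ≤ r :=
      le_trans (le_ciSup (bddAboveTerms hc v) ⟨z, mem_sphere_zero_iff_norm.mpr hz⟩) h
    have hF := capF_pos hc hz
    rw [div_le_iff₀ hF, capF, hz] at hterm
    have h1 : (inner ℝ w z : ℝ) = (inner ℝ v z : ℝ)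
        + r * Real.cos θ * (inner ℝ (lastE n) z : ℝ) := by
      rw [hw, inner_add_left, real_inner_smul_left]
    have h3 : (inner ℝ (lastE n) z : ℝ) = (inner ℝ z (lastE n) : ℝ) := real_inner_comm _ _
    rw [h1, h3]
    nlinarith
  rcases eq_or_ne w 0 with h0 | h0
  · rw [h0]; simpa using hr
  · have hnw : 0 < ‖w‖ := norm_pos_iff.mpr h0
    have hu : ‖‖w‖⁻¹ • w‖ = 1 := by
      rw [norm_smul, Real.norm_eq_abs, abs_of_pos (inv_pos.mpr hnw),
        inv_mul_cancel₀ hnw.ne']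
    have hk := key (‖w‖⁻¹ • w) hu
    rw [real_inner_smul_right, real_inner_self_eq_norm_sq, sq, ← mul_assoc,
      inv_mul_cancel₀ hnw.ne', one_mul] at hk
    exact hk

lemma combo_norm (a b : Euc n) (t : ℝ) :
    ‖(1 - t) • a + t • b‖ ^ 2
      = (1 - t) * ‖a‖ ^ 2 + t * ‖b‖ ^ 2 - t * (1 - t) * ‖a - b‖ ^ 2 := by
  simp only [← real_inner_self_eq_norm_sq]
  simp only [inner_add_left, inner_add_right, inner_sub_left, inner_sub_right,
    real_inner_smul_left, real_inner_smul_right]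
  rw [real_inner_comm b a]
  ring

end Aux

set_option maxHeartbeats 1000000 in
theorem stmt_13 (n : ℕ) (hn : 1 ≤ n) (θ : ℝ) (hθ : θ ∈ Set.Ioo 0 Real.pi)
    (S : Set (Euc n)) (hS : S.Nonempty) (hSc : IsCompact S)
    (r₀ : ℝ) (hr₀ : 0 < r₀) (x y : Euc n)
    (hx : r₀ < shiftedDist n θ S x) (hy : r₀ < shiftedDist n θ S y)
    (p : Euc n) (hp : p ∈ segment ℝ x y) :
    r₀ ^ 2 - ‖x - y‖ ^ 2 / (4 * (1 - |Real.cos θ|) ^ 2) ≤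
      shiftedDist n θ S p ^ 2 := by
  obtain ⟨hθ0, hθπ⟩ := hθ
  have hc : |Real.cos θ| < 1 := by
    rw [abs_lt]
    constructor
    · have := Real.cos_lt_cos_of_nonneg_of_le_pi hθ0.le le_rfl hθπ
      rw [Real.cos_pi] at this; linarith
    · have := Real.cos_lt_cos_of_nonneg_of_le_pi le_rfl (le_of_lt hθπ) hθ0
      rw [Real.cos_zero] at this; linarith
  set c' := |Real.cos θ| with hc'def
  have hc'0 : 0 ≤ c' := abs_nonneg _
  have hbdd : ∀ q : Euc n, BddBelow ((fun z => capFdual n θ (z - q)) '' S) := by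
    intro q
    exact ⟨0, by rintro _ ⟨z, hz, rfl⟩; exact capFdual_nonneg hc _⟩
  have hle : ∀ q (z : Euc n), z ∈ S → shiftedDist n θ S q ≤ capFdual n θ (z - q) := by
    intro q z hz
    exact csInf_le (hbdd q) ⟨z, hz, rfl⟩
  set K := r₀ ^ 2 - ‖x - y‖ ^ 2 / (4 * (1 - c') ^ 2) with hKdef
  rcases le_or_gt K 0 with hKpos | hKpos
  · exact hKpos.trans (sq_nonneg _)
  have hmain : ∀ z ∈ S, K ≤ (capFdual n θ (z - p)) ^ 2 := by
    intro z hzS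
    set s := capFdual n θ (z - p) with hsdef
    have hs0 : 0 ≤ s := capFdual_nonneg hc _
    have hKr : K ≤ r₀ ^ 2 := by
      have hd : 0 ≤ ‖x - y‖ ^ 2 / (4 * (1 - c') ^ 2) :=
        div_nonneg (sq_nonneg _) (by positivity)
      rw [hKdef]; linarith
    rcases le_or_gt r₀ s with hsr | hsr
    · nlinarith
    · have hAx : r₀ ≤ ‖z - x + (r₀ * Real.cos θ) • lastE n‖ := by
        by_contra hcon
        push_neg at hcon
        exact absurd (norm_to_dual hc hcon.le)
          (not_le.mpr (lt_of_lt_of_le hx (hle x z hzS)))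
      have hAy : r₀ ≤ ‖z - y + (r₀ * Real.cos θ) • lastE n‖ := by
        by_contra hcon
        push_neg at hcon
        exact absurd (norm_to_dual hc hcon.le)
          (not_le.mpr (lt_of_lt_of_le hy (hle y z hzS)))
      have hW : ‖z - p + (s * Real.cos θ) • lastE n‖ ≤ s := dual_to_norm hc hs0 le_rfl
      obtain ⟨a, t, ha, ht, hat, hpt⟩ := hp
      have ha1 : a = 1 - t := by linarith
      set A := z - x + (r₀ * Real.cos θ) • lastE n with hA
      set B := z - y + (r₀ * Real.cos θ) • lastE n with hB
      have hWcombo : z - p + (r₀ * Real.cos θ) • lastE n = (1 - t) • A + t • B := by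
        rw [← hpt, ha1, hA, hB]; module
      have hAB : A - B = y - x := by rw [hA, hB]; module
      have hn1 : ‖z - p + (r₀ * Real.cos θ) • lastE n‖ ^ 2
          = (1 - t) * ‖A‖ ^ 2 + t * ‖B‖ ^ 2 - t * (1 - t) * ‖A - B‖ ^ 2 := by
        rw [hWcombo, combo_norm]
      have hABn : ‖A - B‖ = ‖x - y‖ := by rw [hAB, norm_sub_rev]
      have ht1 : t ≤ 1 := by linarith
      have hA2 : r₀ ^ 2 ≤ ‖A‖ ^ 2 := by nlinarith [norm_nonneg A]
      have hB2 : r₀ ^ 2 ≤ ‖B‖ ^ 2 := by nlinarith [norm_nonneg B]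
      have hlow : r₀ ^ 2 - ‖x - y‖ ^ 2 / 4 ≤ ‖z - p + (r₀ * Real.cos θ) • lastE n‖ ^ 2 := by
        rw [hn1, hABn]
        have e1 := mul_le_mul_of_nonneg_left hA2 (by linarith : (0:ℝ) ≤ 1 - t)
        have e2 := mul_le_mul_of_nonneg_left hB2 ht
        have e3 : t * (1 - t) * ‖x - y‖ ^ 2 ≤ ‖x - y‖ ^ 2 / 4 := by
          nlinarith [mul_nonneg (sq_nonneg (1 - 2 * t)) (sq_nonneg ‖x - y‖)]
        nlinarith [e1, e2, e3]
      have hWup : ‖z - p + (r₀ * Real.cos θ) • lastE n‖ ≤ s + (r₀ - s) * c' := by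
        have hsplit : z - p + (r₀ * Real.cos θ) • lastE n
            = (z - p + (s * Real.cos θ) • lastE n) + ((r₀ - s) * Real.cos θ) • lastE n := by
          module
        rw [hsplit]
        refine (norm_add_le _ _).trans ?_
        rw [norm_smul, lastE_norm, mul_one, Real.norm_eq_abs, abs_mul,
          abs_of_nonneg (by linarith : (0:ℝ) ≤ r₀ - s)]
        linarith
      have h0 : 0 ≤ s + (r₀ - s) * c' :=
        add_nonneg hs0 (mul_nonneg (by linarith) hc'0)
      have hsq : ‖z - p + (r₀ * Real.cos θ) • lastE n‖ ^ 2 ≤ (s + (r₀ - s) * c') ^ 2 :=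
        pow_le_pow_left₀ (norm_nonneg _) hWup 2
      have hfin : r₀ ^ 2 - ‖x - y‖ ^ 2 / 4 ≤ (s + (r₀ - s) * c') ^ 2 := hlow.trans hsq
      have hkey : 4 * (1 - c') ^ 2 * (r₀ ^ 2 - s ^ 2) ≤ ‖x - y‖ ^ 2 := by
        nlinarith [mul_nonneg (mul_nonneg (mul_nonneg hc'0
          (by linarith : (0:ℝ) ≤ 1 - c')) hr₀.le) (by linarith : (0:ℝ) ≤ r₀ - s)]
      have h4 : (0:ℝ) < 4 * (1 - c') ^ 2 := by
        have : (0:ℝ) < 1 - c' := by linarith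
        positivity
      have hdiv : r₀ ^ 2 - s ^ 2 ≤ ‖x - y‖ ^ 2 / (4 * (1 - c') ^ 2) := by
        rw [le_div_iff₀ h4]; nlinarith
      rw [hKdef]; linarith
  have hsqrt : Real.sqrt K ≤ shiftedDist n θ S p := by
    rw [shiftedDist]
    apply le_csInf (hS.image _)
    rintro b ⟨z, hzS, rfl⟩
    have h1 := hmain z hzS
    have hb0 : 0 ≤ capFdual n θ (z - p) := capFdual_nonneg hc _
    calc Real.sqrt K ≤ Real.sqrt ((capFdual n θ (z - p)) ^ 2) := Real.sqrt_le_sqrt h1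
      _ = capFdual n θ (z - p) := Real.sqrt_sq hb0
  calc K = (Real.sqrt K) ^ 2 := (Real.sq_sqrt hKpos.le).symm
    _ ≤ shiftedDist n θ S p ^ 2 := pow_le_pow_left₀ (Real.sqrt_nonneg _) hsqrt 2
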